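/- arXiv:math/0108050 — 8 statements merged into one kernel-verified Lean document; each statement's English description precedes it below -/
import Mathlib

section
/- Let V be a finite-dimensional vector space over a field and N : V → V a nilpotent linear endomorphism. Then there exists a unique exhaustive increasing filtration W indexed by the integers (the monodromy filtration), i.e. subspaces W_k V with W_k V ⊆ W_{k+1} V, W_k V = 0 for k sufficiently small and W_k V = V for k sufficiently large, such that N(W_k V) ⊆ W_{k-2} V for all k and such that for every k ≥ 0 the induced map N^k : W_k V / W_{k-1} V → W_{-k} V / W_{-k-1} V is an isomorphism. -/
/-- `W` is the monodromy filtration of the nilpotent endomorphism `N`: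
an exhaustive increasing filtration, bounded below and above, with
`N (W k) ⊆ W (k-2)`, such that for every `k ≥ 0` the map induced by `N^k`
on graded pieces `W k / W (k-1) → W (-k) / W (-k-1)` is an isomorphism
(surjectivity and injectivity of the induced map are expressed without
forming the quotients). -/
def IsMonodromyFiltration {K V : Type*} [Field K] [AddCommGroup V] [Module K V]
    (N : V →ₗ[K] V) (W : ℤ → Submodule K V) : Prop :=
  (∀ k : ℤ, W k ≤ W (k + 1)) ∧
  (∃ a : ℤ, ∀ k ≤ a, W k = ⊥) ∧
  (∃ b : ℤ, ∀ k, b ≤ k → W k = ⊤) ∧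
  (∀ k : ℤ, (W k).map N ≤ W (k - 2)) ∧
  (∀ k : ℤ, 0 ≤ k →
    ((W k).map ((N ^ k.toNat : Module.End K V) : V →ₗ[K] V) ⊔ W (-k - 1) = W (-k)) ∧
    (∀ x ∈ W k, (N ^ k.toNat : Module.End K V) x ∈ W (-k - 1) → x ∈ W (k - 1)))

namespace MonodromyAux

open LinearMap Submodule Module

variable {K V : Type*} [Field K] [AddCommGroup V] [Module K V]

/-- The explicit monodromy filtration. -/
noncomputable def W (N : V →ₗ[K] V) (k : ℤ) : Submodule K V :=
  ⨆ j : ℕ, LinearMap.range (N ^ j) ⊓ LinearMap.ker (N ^ (k + j + 1).toNat)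

variable (N : V →ₗ[K] V)

lemma pow_apply_pow (s t : ℕ) (y : V) : (N ^ s) ((N ^ t) y) = (N ^ (s + t)) y := by
  rw [pow_add, Module.End.mul_apply]

lemma ker_pow_mono {s t : ℕ} (h : s ≤ t) :
    LinearMap.ker (N ^ s) ≤ LinearMap.ker (N ^ t) := by
  intro x hx
  rw [LinearMap.mem_ker] at hx ⊢
  rw [← Nat.sub_add_cancel h, pow_add, Module.End.mul_apply, hx, map_zero]

lemma W_mono (k : ℤ) : W N k ≤ W N (k + 1) := by
  refine iSup_mono fun j => inf_le_inf_left _ (ker_pow_mono N ?_)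
  omega

lemma W_monotone : Monotone (W N) := monotone_int_of_le_succ (W_mono N)

lemma ker_le_W {c : ℕ} {k : ℤ} (h : (c : ℤ) ≤ k + 1) :
    LinearMap.ker (N ^ c) ≤ W N k := by
  refine le_trans ?_ (le_iSup _ 0)
  refine le_inf (fun x _ => ⟨x, by simp⟩) (ker_pow_mono N ?_)
  omega

lemma W_eq_bot {M : ℕ} (hM : N ^ M = 0) {k : ℤ} (hk : k ≤ -(M : ℤ)) : W N k = ⊥ := by
  refine le_bot_iff.mp (iSup_le fun j => ?_)
  by_cases hj : M ≤ j
  · have hr : LinearMap.range (N ^ j) = ⊥ := by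
      rw [← Nat.sub_add_cancel hj, pow_add, hM, mul_zero, LinearMap.range_zero]
    rw [hr, bot_inf_eq]
  · have h0 : (k + j + 1).toNat = 0 := by omega
    rw [h0, pow_zero]
    refine le_trans inf_le_right ?_
    intro x hx
    rw [LinearMap.mem_ker] at hx
    simpa using hx

lemma W_eq_top {M : ℕ} (hM : N ^ M = 0) {k : ℤ} (hk : (M : ℤ) ≤ k) : W N k = ⊤ := by
  refine top_le_iff.mp ?_
  refine le_trans ?_ (ker_le_W N (c := M) (by omega))
  rw [LinearMap.ker_eq_top.mpr hM]

lemma map_W_le (k : ℤ) : (W N k).map N ≤ W N (k - 2) := by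
  rw [W, Submodule.map_iSup]
  refine iSup_le fun j => ?_
  refine le_trans ?_ (le_iSup _ (j + 1))
  intro x hx
  rw [Submodule.mem_map] at hx
  obtain ⟨y, hy, rfl⟩ := hx
  rw [Submodule.mem_inf] at hy
  obtain ⟨⟨z, rfl⟩, hker⟩ := hy
  rw [LinearMap.mem_ker] at hker
  constructor
  · exact ⟨z, by rw [pow_succ', Module.End.mul_apply]⟩
  · simp only [SetLike.mem_coe, LinearMap.mem_ker]
    push_cast
    by_cases h : 0 ≤ k + j
    · have h1 : (k - 2 + ((j : ℤ) + 1) + 1).toNat + 1 = (k + j + 1).toNat := by omega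
      calc (N ^ (k - 2 + ((j : ℤ) + 1) + 1).toNat) (N ((N ^ j) z))
          = (N ^ (k - 2 + ((j : ℤ) + 1) + 1).toNat) ((N ^ 1) ((N ^ j) z)) := by rw [pow_one]
        _ = (N ^ ((k - 2 + ((j : ℤ) + 1) + 1).toNat + 1)) ((N ^ j) z) := pow_apply_pow N _ 1 _
        _ = 0 := by rw [h1, hker]
    · have h0 : (k + j + 1).toNat = 0 := by omega
      rw [h0, pow_zero] at hker
      simp only [Module.End.one_apply] at hker
      rw [hker, map_zero, map_zero]

lemma map_term (c j : ℕ) :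
    (LinearMap.range (N ^ j) ⊓ LinearMap.ker (N ^ (c + j + 1))).map (N ^ c)
      = LinearMap.range (N ^ (c + j)) ⊓ LinearMap.ker (N ^ (j + 1)) := by
  ext x
  rw [Submodule.mem_map, Submodule.mem_inf]
  constructor
  · rintro ⟨w, hw, rfl⟩
    rw [Submodule.mem_inf] at hw
    obtain ⟨⟨y, rfl⟩, hker⟩ := hw
    rw [LinearMap.mem_ker] at hker
    constructor
    · exact ⟨y, (pow_apply_pow N c j y).symm⟩
    · rw [LinearMap.mem_ker, pow_apply_pow N (j + 1) c, show j + 1 + c = c + j + 1 by omega]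
      exact hker
  · rintro ⟨⟨y, rfl⟩, hx⟩
    rw [LinearMap.mem_ker, pow_apply_pow N (j + 1) (c + j)] at hx
    refine ⟨(N ^ j) y, ?_, pow_apply_pow N c j y⟩
    rw [Submodule.mem_inf]
    refine ⟨⟨y, rfl⟩, ?_⟩
    rw [LinearMap.mem_ker, pow_apply_pow N (c + j + 1) j,
      show c + j + 1 + j = j + 1 + (c + j) by omega]
    exact hx

lemma map_pow_W (c : ℕ) : (W N (c : ℤ)).map (N ^ c) = W N (-(c : ℤ)) := by
  rw [W, Submodule.map_iSup]
  apply le_antisymm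
  · refine iSup_le fun j => ?_
    have h1 : ((c : ℤ) + j + 1).toNat = c + j + 1 := by omega
    rw [h1, map_term]
    refine le_trans (le_of_eq ?_) (le_iSup
      (fun j' : ℕ => LinearMap.range (N ^ j') ⊓ LinearMap.ker (N ^ (-(c:ℤ) + j' + 1).toNat))
      (c + j))
    have h2 : (-(c : ℤ) + (c + j : ℕ) + 1).toNat = j + 1 := by omega
    rw [h2]
  · refine iSup_le fun j' => ?_
    by_cases hj : j' < c
    · have h0 : (-(c : ℤ) + j' + 1).toNat = 0 := by omega
      rw [h0, pow_zero]
      intro x hx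
      rw [Submodule.mem_inf] at hx
      have : x = 0 := by simpa using hx.2
      simp [this]
    · obtain ⟨j, rfl⟩ : ∃ j : ℕ, j' = c + j := ⟨j' - c, by omega⟩
      refine le_trans (le_of_eq ?_) (le_iSup _ j)
      have h1 : ((c : ℤ) + j + 1).toNat = c + j + 1 := by omega
      have h2 : (-(c : ℤ) + (c + j : ℕ) + 1).toNat = j + 1 := by omega
      rw [h1, h2, map_term]

/-- Existence: the explicit filtration is a monodromy filtration. -/
lemma isMonodromy_W (hN : IsNilpotent N) : IsMonodromyFiltration N (W N) := by
  obtain ⟨m, hm⟩ := hN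
  have hM : N ^ (m + 1) = 0 := by rw [pow_succ, hm, zero_mul]
  refine ⟨W_mono N, ⟨-((m + 1 : ℕ) : ℤ), fun k hk => W_eq_bot N hM hk⟩,
    ⟨((m + 1 : ℕ) : ℤ), fun k hk => W_eq_top N hM hk⟩,
    map_W_le N, fun k hk => ?_⟩
  set c := k.toNat with hc
  have hck : (c : ℤ) = k := Int.toNat_of_nonneg hk
  constructor
  · have h1 : (W N k).map (N ^ c) = W N (-k) := by
      rw [← hck]; exact map_pow_W N c
    rw [h1]
    exact sup_eq_left.mpr (W_monotone N (by omega))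
  · intro x hx hNx
    have h2 : W N (-k - 1) = (W N (k + 1)).map (N ^ (c + 1)) := by
      have := (map_pow_W N (c + 1)).symm
      rw [show (((c + 1 : ℕ)) : ℤ) = k + 1 by omega,
        show (-(k + 1) : ℤ) = -k - 1 by ring] at this
      exact this
    rw [h2, Submodule.mem_map] at hNx
    obtain ⟨z, hz, hzx⟩ := hNx
    have hxz : x - N z ∈ LinearMap.ker (N ^ c) := by
      rw [LinearMap.mem_ker, map_sub]
      have : (N ^ c) (N z) = (N ^ (c + 1)) z := by
        rw [pow_succ, Module.End.mul_apply]
      rw [this, hzx, sub_self]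
    have hxz' : x - N z ∈ W N (k - 1) := ker_le_W N (by omega) hxz
    have hNz : N z ∈ W N (k - 1) := by
      have : N z ∈ (W N (k + 1)).map N := ⟨z, hz, rfl⟩
      have h3 := map_W_le N (k + 1) this
      rwa [show k + 1 - 2 = k - 1 by ring] at h3
    have := add_mem hxz' hNz
    rwa [sub_add_cancel] at this

section Uniqueness

variable {N} {W' : ℤ → Submodule K V} (hW : IsMonodromyFiltration N W')

include hW

lemma mono' : Monotone W' := monotone_int_of_le_succ hW.1

lemma ker_le' (c : ℕ) : LinearMap.ker (N ^ c) ≤ W' ((c : ℤ) - 1) := by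
  intro x hx
  rw [LinearMap.mem_ker] at hx
  by_cases hx0 : x = 0
  · rw [hx0]; exact zero_mem _
  obtain ⟨a, ha⟩ := hW.2.1
  obtain ⟨b, hb⟩ := hW.2.2.1
  have hbdd : ∃ lo : ℤ, ∀ z, x ∈ W' z → lo ≤ z := by
    refine ⟨a + 1, fun z hz => ?_⟩
    by_contra h
    have : W' z = ⊥ := ha z (by omega)
    rw [this] at hz
    exact hx0 (by simpa using hz)
  have hinh : ∃ z, x ∈ W' z := ⟨b, by rw [hb b le_rfl]; trivial⟩
  obtain ⟨k₀, hk₀, hleast⟩ := Int.exists_least_of_bdd hbdd hinh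
  by_cases hkc : k₀ ≤ (c : ℤ) - 1
  · exact mono' hW hkc hk₀
  · exfalso
    have h0 : 0 ≤ k₀ := by omega
    have hc : c ≤ k₀.toNat := by omega
    have hNx : (N ^ k₀.toNat) x = 0 := by
      rw [← Nat.sub_add_cancel hc, pow_add, Module.End.mul_apply, hx, map_zero]
    have := (hW.2.2.2.2 k₀ h0).2 x hk₀ (by rw [hNx]; exact zero_mem _)
    have := hleast _ this
    omega

lemma map_pow_le' (t : ℕ) (j : ℤ) : (W' j).map (N ^ t) ≤ W' (j - 2 * t) := by
  induction t generalizing j with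
  | zero =>
    simp only [pow_zero, Nat.cast_zero, mul_zero, sub_zero]
    rw [Module.End.one_eq_id, Submodule.map_id]
  | succ t ih =>
    have hcomp : (N ^ (t + 1) : V →ₗ[K] V) = (N ^ t : V →ₗ[K] V) ∘ₗ N := by
      rw [pow_succ]
      rfl
    rw [hcomp, Submodule.map_comp]
    refine le_trans (Submodule.map_mono (hW.2.2.2.1 j)) (le_trans (ih (j - 2)) ?_)
    have : j - 2 - 2 * (t : ℤ) = j - 2 * ((t : ℕ) + 1 : ℕ) := by push_cast; ring
    rw [this]

lemma W_le' (k : ℤ) : W N k ≤ W' k := by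
  refine iSup_le fun j => ?_
  by_cases hk : k + j + 1 ≤ 0
  · have h0 : (k + j + 1).toNat = 0 := by omega
    rw [h0, pow_zero]
    intro x hx
    rw [Submodule.mem_inf] at hx
    have : x = 0 := by simpa using hx.2
    rw [this]; exact zero_mem _
  · intro x hx
    rw [Submodule.mem_inf] at hx
    obtain ⟨⟨y, rfl⟩, hker⟩ := hx
    set c := (k + j + 1).toNat with hcdef
    have hc : (c : ℤ) = k + j + 1 := by omega
    have hy : y ∈ LinearMap.ker (N ^ (c + j)) := by
      rw [LinearMap.mem_ker, ← pow_apply_pow N c j]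
      exact hker
    have hy' : y ∈ W' (((c + j : ℕ) : ℤ) - 1) := ker_le' hW (c + j) hy
    have h2 : (N ^ j) y ∈ W' ((((c + j : ℕ) : ℤ) - 1) - 2 * j) :=
      map_pow_le' hW j _ ⟨y, hy', rfl⟩
    have h3 : (((c + j : ℕ) : ℤ) - 1) - 2 * j = k := by push_cast; omega
    rwa [h3] at h2

end Uniqueness

section Rank

variable [FiniteDimensional K V]
variable {N : V →ₗ[K] V} {W' : ℤ → Submodule K V} (hW : IsMonodromyFiltration N W')

include hW

open Module

lemma rank_step (k : ℤ) (hk : 0 ≤ k) :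
    finrank K (W' k) + finrank K (W' (-k - 1))
      = finrank K (W' (k - 1)) + finrank K (W' (-k)) := by
  set c := k.toNat with hcdef
  have hck : (c : ℤ) = k := Int.toNat_of_nonneg hk
  have hle1 : W' (k - 1) ≤ W' k := mono' hW (by omega)
  have hle2 : W' (-k - 1) ≤ W' (-k) := mono' hW (by omega)
  set ψ : (W' k) →ₗ[K] V ⧸ W' (-k - 1) :=
    (W' (-k - 1)).mkQ ∘ₗ (N ^ c : V →ₗ[K] V) ∘ₗ (W' k).subtype with hψ
  have hrn := LinearMap.finrank_range_add_finrank_ker ψ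
  -- kernel of ψ
  have hker : LinearMap.ker ψ = (W' (k - 1)).comap (W' k).subtype := by
    ext ⟨x, hx⟩
    simp only [hψ, LinearMap.mem_ker, LinearMap.comp_apply, Submodule.subtype_apply,
      Submodule.mkQ_apply, Submodule.Quotient.mk_eq_zero, Submodule.mem_comap]
    constructor
    · intro h
      exact (hW.2.2.2.2 k hk).2 x hx h
    · intro h
      have := map_pow_le' hW c (k - 1) ⟨x, h, rfl⟩
      rwa [show k - 1 - 2 * (c : ℤ) = -k - 1 by omega] at this
  have hkerrank : finrank K (LinearMap.ker ψ) = finrank K (W' (k - 1)) := by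
    rw [hker]
    exact LinearEquiv.finrank_eq (Submodule.comapSubtypeEquivOfLe hle1)
  -- range of ψ
  have hbotmap : ((W' (-k - 1)).map (W' (-k - 1)).mkQ : Submodule K (V ⧸ W' (-k - 1))) = ⊥ := by
    refine le_antisymm ?_ bot_le
    rw [Submodule.map_le_iff_le_comap, Submodule.comap_bot, Submodule.ker_mkQ]
  have hrange : LinearMap.range ψ = (W' (-k)).map (W' (-k - 1)).mkQ := by
    rw [hψ, LinearMap.range_comp, LinearMap.range_comp, Submodule.range_subtype]
    conv_rhs => rw [← (hW.2.2.2.2 k hk).1]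
    rw [Submodule.map_sup, hbotmap, sup_bot_eq, ← hcdef]
  -- rank-nullity for the projection of W' (-k)
  set φ : (W' (-k)) →ₗ[K] V ⧸ W' (-k - 1) :=
    (W' (-k - 1)).mkQ ∘ₗ (W' (-k)).subtype with hφ
  have hrn2 := LinearMap.finrank_range_add_finrank_ker φ
  have hφrange : LinearMap.range φ = (W' (-k)).map (W' (-k - 1)).mkQ := by
    rw [hφ, LinearMap.range_comp, Submodule.range_subtype]
  have hφker : finrank K (LinearMap.ker φ) = finrank K (W' (-k - 1)) := by
    rw [hφ, LinearMap.ker_comp, Submodule.ker_mkQ]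
    exact LinearEquiv.finrank_eq (Submodule.comapSubtypeEquivOfLe hle2)
  rw [hφrange, hφker] at hrn2
  rw [hrange, hkerrank] at hrn
  omega

lemma rank_sum (k : ℤ) (hk : 0 ≤ k) :
    finrank K (W' k) + finrank K (W' (-k - 1)) = finrank K V := by
  obtain ⟨a, ha⟩ := hW.2.1
  obtain ⟨b, hb⟩ := hW.2.2.1
  have key : ∀ s : ℤ, k ≤ s →
      finrank K (W' k) + finrank K (W' (-k - 1))
        = finrank K (W' s) + finrank K (W' (-s - 1)) := by
    refine Int.le_induction rfl ?_
    intro s hs ih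
    rw [ih]
    have hstep := rank_step hW (s + 1) (by omega)
    rw [show -(s + 1) - 1 = -s - 2 by ring, show s + 1 - 1 = s by ring,
      show -(s + 1) = -s - 1 by ring] at hstep
    rw [show -(s + 1) - 1 = -s - 2 by ring]
    omega
  set S : ℤ := max k (max b (-a - 1)) with hS
  have h1 : W' S = ⊤ := hb S (by omega)
  have h2 : W' (-S - 1) = ⊥ := ha _ (by omega)
  rw [key S (by omega), h1, h2, finrank_top, finrank_bot, add_zero]

end Rank

end MonodromyAux

/-- Existence and uniqueness of the monodromy filtration of a nilpotent
endomorphism of a finite-dimensional vector space. -/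
theorem exists_unique_monodromyFiltration
    {K V : Type*} [Field K] [AddCommGroup V] [Module K V] [FiniteDimensional K V]
    (N : V →ₗ[K] V) (hN : IsNilpotent N) :
    ∃! W : ℤ → Submodule K V, IsMonodromyFiltration N W := by
  refine ⟨MonodromyAux.W N, MonodromyAux.isMonodromy_W N hN, ?_⟩
  intro W' hW'
  have hmon := MonodromyAux.isMonodromy_W N hN
  funext k
  have hle : ∀ j : ℤ, MonodromyAux.W N j ≤ W' j := MonodromyAux.W_le' hW'
  have key : ∀ j : ℤ, 0 ≤ j →
      W' j = MonodromyAux.W N j ∧ W' (-j - 1) = MonodromyAux.W N (-j - 1) := by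
    intro j hj
    have r1 := MonodromyAux.rank_sum hW' j hj
    have r2 := MonodromyAux.rank_sum hmon j hj
    have m1 := Submodule.finrank_mono (hle j)
    have m2 := Submodule.finrank_mono (hle (-j - 1))
    have e1 : Module.finrank K (MonodromyAux.W N j) = Module.finrank K (W' j) := by omega
    have e2 : Module.finrank K (MonodromyAux.W N (-j - 1))
        = Module.finrank K (W' (-j - 1)) := by omega
    exact ⟨(Submodule.eq_of_le_of_finrank_eq (hle j) e1).symm,
      (Submodule.eq_of_le_of_finrank_eq (hle (-j - 1)) e2).symm⟩
  rcases le_or_gt 0 k with h | h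
  · exact (key k h).1
  · have := (key (-k - 1) (by omega)).2
    rwa [show -(-k - 1) - 1 = k by ring] at this
end

section
/- Let V, V' be finite-dimensional vector spaces over a field with nilpotent endomorphisms N, N', and let W, W' be their monodromy filtrations. If φ : V → V' is a linear map with φ ∘ N = N' ∘ φ, then φ(W_k V) ⊆ W'_k V' for all integers k. -/
namespace IsMonodromyFiltration

variable {K V V' : Type*} [Field K] [AddCommGroup V] [Module K V] [AddCommGroup V'] [Module K V']
  {N : V →ₗ[K] V} {W : ℤ → Submodule K V} {N' : V' →ₗ[K] V'} {W' : ℤ → Submodule K V'}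

protected theorem monotone (hW : IsMonodromyFiltration N W) : Monotone W :=
  monotone_int_of_le_succ hW.1

theorem map_pow_le (hW : IsMonodromyFiltration N W) (n : ℕ) (k : ℤ) :
    (W k).map (N ^ n) ≤ W (k - 2 * n) := by
  induction n generalizing k with
  | zero => simp [Module.End.one_eq_id]
  | succ n ih =>
    rw [pow_succ, Module.End.mul_eq_comp, Submodule.map_comp]
    calc ((W k).map N).map (N ^ n) ≤ (W (k - 2)).map (N ^ n) := Submodule.map_mono (hW.2.2.2.1 k)
      _ ≤ W (k - 2 - 2 * n) := ih (k - 2)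
      _ = W (k - 2 * ↑(n + 1)) := by push_cast; ring_nf

theorem le_of_map_pow_le (hW : IsMonodromyFiltration N W) {k : ℤ} (hk : k ≤ 0)
    {S : Submodule K V} (hS : ∀ j, -k ≤ j → (W j).map (N ^ j.toNat) ≤ S) : W k ≤ S := by
  obtain ⟨a, ha⟩ := hW.2.1
  suffices ∀ m, m ≤ k → W m ≤ S from this k le_rfl
  intro m
  induction m using Int.strongRec (m := a + 1) with
  | lt m hm => intro; simp [ha m (by omega)]
  | ge m _ ih =>
    intro hmk
    have hsup := (hW.2.2.2.2 (-m) (by omega)).1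
    rw [neg_neg] at hsup
    rw [← hsup]
    exact sup_le (hS _ (by omega)) (ih _ (by omega) (by omega))

variable {φ : V →ₗ[K] V'}

theorem map_le_of_nonpos (hW : IsMonodromyFiltration N W) (hW' : IsMonodromyFiltration N' W')
    (hφ : φ.comp N = N'.comp φ) {k : ℤ} (hk : k ≤ 0)
    (h : ∀ j, -k ≤ j → (W j).map φ ≤ W' j) : (W k).map φ ≤ W' k := by
  rw [Submodule.map_le_iff_le_comap]
  refine hW.le_of_map_pow_le hk fun j hj => ?_
  rw [← Submodule.map_le_iff_le_comap, ← Submodule.map_comp,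
    ← Module.End.commute_pow_left_of_commute hφ.symm, Submodule.map_comp]
  calc ((W j).map φ).map (N' ^ j.toNat) ≤ (W' j).map (N' ^ j.toNat) := Submodule.map_mono (h j hj)
    _ ≤ W' (j - 2 * j.toNat) := hW'.map_pow_le _ _
    _ ≤ W' k := hW'.monotone (by omega)

theorem map_le_of_forall_lt (hW : IsMonodromyFiltration N W) (hW' : IsMonodromyFiltration N' W')
    (hφ : φ.comp N = N'.comp φ) {k : ℤ}
    (h : ∀ j, k < j → (W j).map φ ≤ W' j) : (W k).map φ ≤ W' k := by
  rcases lt_or_ge k 0 with hk | hk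
  · exact map_le_of_nonpos hW hW' hφ hk.le fun j hj => h j (by omega)
  rintro _ ⟨x, hx, rfl⟩
  set n := (k + 1).toNat
  have hφx : φ x ∈ W' (k + 1) :=
    h _ (lt_add_one k) (Submodule.mem_map_of_mem (hW.monotone (by omega) hx))
  have hNx : (N ^ n) x ∈ W (-(k + 1) - 1) := by
    convert hW.map_pow_le n k (Submodule.mem_map_of_mem hx) using 2
    omega
  have hN'φx : (N' ^ n) (φ x) ∈ W' (-(k + 1) - 1) := by
    rw [← LinearMap.comp_apply, Module.End.commute_pow_left_of_commute hφ.symm,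
      LinearMap.comp_apply]
    exact map_le_of_nonpos hW hW' hφ (by omega) (fun j hj => h j (by omega))
      (Submodule.mem_map_of_mem hNx)
  simpa using (hW'.2.2.2.2 (k + 1) (by omega)).2 (φ x) hφx hN'φx

end IsMonodromyFiltration

theorem monodromyFiltration_map_le_general
    {K V V' : Type*} [Field K] [AddCommGroup V] [Module K V]
    [AddCommGroup V'] [Module K V']
    (N : V →ₗ[K] V) (N' : V' →ₗ[K] V')
    (W : ℤ → Submodule K V) (W' : ℤ → Submodule K V')
    (hW : IsMonodromyFiltration N W) (hW' : IsMonodromyFiltration N' W')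
    (φ : V →ₗ[K] V') (hφ : φ.comp N = N'.comp φ) :
    ∀ k : ℤ, (W k).map φ ≤ W' k := by
  obtain ⟨b, hb⟩ := hW'.2.2.1
  intro k
  rw [← neg_neg k]
  induction -k using Int.strongRec (m := -b) with
  | lt n hn => simp [hb (-n) (by omega)]
  | ge n _ ih =>
    exact hW.map_le_of_forall_lt hW' hφ fun j hj => neg_neg j ▸ ih (-j) (by omega)

/-- Functoriality of the monodromy filtration: a linear map intertwining two
nilpotent endomorphisms is filtered with respect to the monodromy filtrations. -/
theorem monodromyFiltration_map_le
    {K V V' : Type*} [Field K] [AddCommGroup V] [Module K V] [FiniteDimensional K V]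
    [AddCommGroup V'] [Module K V'] [FiniteDimensional K V']
    (N : V →ₗ[K] V) (N' : V' →ₗ[K] V') (hN : IsNilpotent N) (hN' : IsNilpotent N')
    (W : ℤ → Submodule K V) (W' : ℤ → Submodule K V')
    (hW : IsMonodromyFiltration N W) (hW' : IsMonodromyFiltration N' W')
    (φ : V →ₗ[K] V') (hφ : φ.comp N = N'.comp φ) :
    ∀ k : ℤ, (W k).map φ ≤ W' k :=
  monodromyFiltration_map_le_general N N' W W' hW hW' φ hφ
end

section
/- Let A be a commutative ring, p ∈ A[t] a monic polynomial whose discriminant and constant term are units in A, and m ≥ 1. Set B = A[t]/(p(t)^m) and let u ∈ B be the image of t. Then there exists a unique q ∈ B such that q ≡ 1 modulo the ideal (p(u)) of B and such that p(u · q^{-1}) = 0 in B. (Such q is automatically a unit of B since it is congruent to 1 modulo a nilpotent ideal.) -/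
/-!
As `p(u)` is nilpotent and `p` is coprime to `p'`, the value `p'(u)` is a unit, so Newton's
iteration yields a unique root `v` of `p` with `u - v` nilpotent. Near such a simple root `p(x)`
and `x - v` differ by a unit factor, so in fact `p(u) ∣ u - v`. The conditions on `q` say exactly
that `v = u q⁻¹` is such a root, whence `q = u v⁻¹`; here `u` is a unit because it divides
`p(u) - p(0)`, a unit plus a nilpotent.
-/

open Polynomial

theorem IsCoprime.isUnit_of_isNilpotent_left {R : Type*} [CommRing R] {a b : R}
    (h : IsCoprime a b) (ha : IsNilpotent a) : IsUnit b := by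
  obtain ⟨x, y, hxy⟩ := h
  have : IsUnit (y * b) := by
    rw [show y * b = 1 - x * a by linear_combination hxy]
    exact ((Commute.all x a).isNilpotent_mul_left ha).isUnit_one_sub
  exact isUnit_of_mul_isUnit_right this

namespace Polynomial

variable {R S : Type*} [CommRing R] [CommRing S] [Algebra R S] {P : R[X]}

theorem Separable.isUnit_aeval_derivative {x : S} (hP : P.Separable)
    (h : IsNilpotent (aeval x P)) : IsUnit (aeval x (derivative P)) :=
  (IsCoprime.map hP (aeval x).toRingHom).isUnit_of_isNilpotent_left h

theorem isUnit_of_isNilpotent_aeval {u : S} (h0 : IsUnit (P.coeff 0))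
    (h : IsNilpotent (aeval u P)) : IsUnit u := by
  have hdvd : u ∣ aeval u P - algebraMap R S (P.coeff 0) := by
    simpa using _root_.map_dvd (aeval u) (X_dvd_sub_C (p := P))
  refine isUnit_of_dvd_unit hdvd ?_
  rw [sub_eq_add_neg, add_comm]
  exact h.isUnit_add_left_of_commute (h0.map _).neg (Commute.all _ _)

theorem aeval_dvd_sub_of_aeval_eq_zero {x r : S} (hr : aeval r P = 0)
    (hr' : IsUnit (aeval r (derivative P))) (hxr : IsNilpotent (x - r)) :
    aeval x P ∣ x - r := by
  -- `P(x) = (x - r) (P'(r) + k (x - r))`, and the second factor is a unit.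
  obtain ⟨k, hk⟩ := binomExpansion (P.map (algebraMap R S)) r (x - r)
  rw [derivative_map, eval_map_algebraMap, eval_map_algebraMap, eval_map_algebraMap,
    add_sub_cancel, hr, zero_add] at hk
  have hunit : IsUnit (aeval r (derivative P) + k * (x - r)) :=
    ((Commute.all k _).isNilpotent_mul_left hxr).isUnit_add_left_of_commute hr'
      (Commute.all _ _)
  refine (hunit.dvd_mul_right).mp ⟨1, ?_⟩
  rw [hk]; ring

theorem existsUnique_dvd_sub_and_aeval_eq_zero {x : S} (h : IsNilpotent (aeval x P))
    (h' : IsUnit (aeval x (derivative P))) :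
    ∃! r, aeval x P ∣ x - r ∧ aeval r P = 0 := by
  obtain ⟨r, ⟨hxr, hr⟩, huniq⟩ := existsUnique_nilpotent_sub_and_aeval_eq_zero h h'
  refine ⟨r, ⟨aeval_dvd_sub_of_aeval_eq_zero hr ?_ hxr, hr⟩, ?_⟩
  · exact isUnit_aeval_of_isUnit_aeval_of_isNilpotent_sub h' (by simpa using hxr.neg)
  · rintro s ⟨hxs, hs⟩
    obtain ⟨c, hc⟩ := hxs
    exact huniq s ⟨hc ▸ (Commute.all _ c).isNilpotent_mul_right h, hs⟩

theorem existsUnique_twist_of_isNilpotent_aeval (hP : P.Separable) {u : S} (hu : IsUnit u)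
    (hnil : IsNilpotent (aeval u P)) :
    ∃! q : S, ∃ hq : IsUnit q,
      q - 1 ∈ Ideal.span {aeval u P} ∧ aeval (u * ↑hq.unit⁻¹) P = 0 := by
  obtain ⟨v, ⟨huv, hv⟩, hv_uniq⟩ :=
    existsUnique_dvd_sub_and_aeval_eq_zero hnil (hP.isUnit_aeval_derivative hnil)
  have hv_unit : IsUnit v := by
    obtain ⟨c, hc⟩ := huv
    have : IsNilpotent (-(u - v)) := hc ▸ ((Commute.all _ c).isNilpotent_mul_right hnil).neg
    simpa using this.isUnit_add_left_of_commute hu (Commute.all _ _)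
  have twist_eq_iff {q : S} (hq : IsUnit q) : u * ↑hq.unit⁻¹ = v ↔ q * v = u := by
    rw [Units.mul_inv_eq_iff_eq_mul, IsUnit.unit_spec, mul_comm, eq_comm]
  refine ⟨u * ↑hv_unit.unit⁻¹, ⟨hu.mul (Units.isUnit _), ?_, ?_⟩, ?_⟩
  · rw [Ideal.mem_span_singleton]
    have : u * ↑hv_unit.unit⁻¹ - 1 = (u - v) * ↑hv_unit.unit⁻¹ := by
      rw [sub_mul, hv_unit.mul_val_inv]
    exact this ▸ huv.mul_right _
  · rwa [(twist_eq_iff _).mpr]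
    rw [mul_assoc, hv_unit.val_inv_mul, mul_one]
  · rintro q ⟨hq, hq1, hq_root⟩
    have hqv : q * (u * ↑hq.unit⁻¹) = u := by
      rw [mul_left_comm, hq.mul_val_inv, mul_one]
    have : u * ↑hq.unit⁻¹ = v := by
      refine hv_uniq _ ⟨?_, hq_root⟩
      have : u - u * ↑hq.unit⁻¹ = (q - 1) * (u * ↑hq.unit⁻¹) := by
        rw [sub_mul, hqv, one_mul]
      exact this ▸ (Ideal.mem_span_singleton.mp hq1).mul_right _
    rw [← hv_unit.mul_left_inj, (twist_eq_iff hq).mp this, mul_assoc, hv_unit.val_inv_mul,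
      mul_one]

end Polynomial

theorem exists_unique_unipotent_twist_general
    {A : Type*} [CommRing A] (p : Polynomial A)
    (hsep : p.Separable) (hconst : IsUnit (p.coeff 0)) (m : ℕ) :
    ∃! q : Polynomial A ⧸ Ideal.span {p ^ m},
      ∃ hq : IsUnit q,
        q - 1 ∈ Ideal.span {Polynomial.aeval
            (Ideal.Quotient.mk (Ideal.span {p ^ m}) Polynomial.X) p} ∧
        Polynomial.aeval
          ((Ideal.Quotient.mk (Ideal.span {p ^ m}) Polynomial.X) * ((hq.unit⁻¹ : _ˣ) : Polynomial A ⧸ Ideal.span {p ^ m})) p = 0 := by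
  have haeval_X : aeval (Ideal.Quotient.mk (Ideal.span {p ^ m}) X) p = Ideal.Quotient.mk _ p := by
    simpa using aeval_algHom_apply (Ideal.Quotient.mkₐ A (Ideal.span {p ^ m})) X p
  have hnil : IsNilpotent (Ideal.Quotient.mk (Ideal.span {p ^ m}) p) :=
    ⟨m, by rw [← map_pow, Ideal.Quotient.eq_zero_iff_mem]; exact Ideal.mem_span_singleton_self _⟩
  rw [← haeval_X] at hnil
  exact existsUnique_twist_of_isNilpotent_aeval hsep (isUnit_of_isNilpotent_aeval hconst hnil) hnil

/-- Let `p ∈ A[t]` be a monic polynomial which is separable (equivalently, its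
discriminant is a unit of `A`) and whose constant term is a unit. In
`B = A[t]/(p(t)^m)`, with `u` the image of `t`, there is a unique `q ∈ B`
with `q ≡ 1 mod (p(u))` and `p(u·q⁻¹) = 0` (such `q` is automatically a unit,
being congruent to `1` modulo a nilpotent ideal; the condition `p(u·q⁻¹) = 0`
includes the assertion that `q` is invertible). -/
theorem exists_unique_unipotent_twist
    {A : Type*} [CommRing A] (p : Polynomial A) (hmonic : p.Monic)
    (hsep : p.Separable) (hconst : IsUnit (p.coeff 0)) (m : ℕ) (hm : 1 ≤ m) :
    ∃! q : Polynomial A ⧸ Ideal.span {p ^ m},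
      ∃ hq : IsUnit q,
        q - 1 ∈ Ideal.span {Polynomial.aeval
            (Ideal.Quotient.mk (Ideal.span {p ^ m}) Polynomial.X) p} ∧
        Polynomial.aeval
          ((Ideal.Quotient.mk (Ideal.span {p ^ m}) Polynomial.X) * ((hq.unit⁻¹ : _ˣ) : Polynomial A ⧸ Ideal.span {p ^ m})) p = 0 :=
  exists_unique_unipotent_twist_general p hsep hconst m
end

section
/- Let A be a Noetherian integral domain and M a finitely generated A-module. Then there exists a nonzero element f ∈ A such that the localization M_f is a free A_f-module. -/
/-- Generic freeness: a finitely generated module over a Noetherian integral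
domain becomes free after localizing at some nonzero element. -/
theorem generic_freeness
    {A M : Type*} [CommRing A] [IsDomain A] [IsNoetherianRing A]
    [AddCommGroup M] [Module A M] [Module.Finite A M] :
    ∃ f : A, f ≠ 0 ∧
      Module.Free (Localization (Submonoid.powers f))
        (LocalizedModule (Submonoid.powers f) M) := by
  have : Module.FinitePresentation A M := Module.finitePresentation_of_finite A M
  have h : Module.Free (FractionRing A) (LocalizedModule (nonZeroDivisors A) M) :=
    Module.Free.of_divisionRing _ _
  obtain ⟨r, hr, hfree, -⟩ :=
    Module.FinitePresentation.exists_free_localizedModule_powers (nonZeroDivisors A)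
      (LocalizedModule.mkLinearMap (nonZeroDivisors A) M) (FractionRing A)
  exact ⟨r, nonZeroDivisors.ne_zero hr, hfree⟩
end

section
/- Let A be a Noetherian integral domain with fraction field K, let M be a finitely generated A-module, and let u ∈ M be an element whose image in M ⊗_A K is nonzero. Then there exists a nonzero f ∈ A such that for every field k and every ring homomorphism A_f → k, the image of u in M ⊗_A k is nonzero. -/
/-!
Pick a `K`-linear functional on the vector space `K ⊗_A M` that does not vanish on `1 ⊗ u`; it
restricts to an `A`-linear map `M → K`. As `M` is finitely presented over the Noetherian ring `A`,
a nonzero multiple of this map takes values in `A`, giving `g : M → A` with `g u ≠ 0`; take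
`f = g u`. For any `A`-algebra `k`, the base change of `g` sends `1 ⊗ u` to the image of `f` in `k`.
-/

open scoped TensorProduct

theorem exists_linearMap_apply_ne_zero_of_one_tmul_ne_zero {A M K : Type*} [CommRing A]
    [AddCommGroup M] [Module A M] [Field K] [Algebra A K] {u : M}
    (hu : (1 : K) ⊗ₜ[A] u ≠ 0) : ∃ ψ : M →ₗ[A] K, ψ u ≠ 0 := by
  obtain ⟨φ, hφ⟩ : ∃ φ : Module.Dual K (K ⊗[A] M), φ ((1 : K) ⊗ₜ[A] u) ≠ 0 := by
    simpa only [ne_eq, not_forall] using mt (Module.forall_dual_apply_eq_zero_iff K _).mp hu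
  exact ⟨(φ.restrictScalars A) ∘ₗ TensorProduct.mk A K M 1, hφ⟩

theorem exists_dual_apply_ne_zero_of_one_tmul_ne_zero {A M K : Type*} [CommRing A]
    [IsNoetherianRing A] [AddCommGroup M] [Module A M] [Module.Finite A M] [Field K]
    [Algebra A K] (S : Submonoid A) [IsLocalization S K] {u : M} (hu : (1 : K) ⊗ₜ[A] u ≠ 0) :
    ∃ g : Module.Dual A M, g u ≠ 0 := by
  obtain ⟨ψ, hψ⟩ := exists_linearMap_apply_ne_zero_of_one_tmul_ne_zero hu
  have := Module.finitePresentation_of_finite A M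
  obtain ⟨g, s, hg⟩ := Module.FinitePresentation.exists_lift_of_isLocalizedModule
    S (Algebra.linearMap A K) ψ
  refine ⟨g, fun hgu => ?_⟩
  have hs : algebraMap A K s ≠ 0 := (IsLocalization.map_units K s).ne_zero
  have hsψ := congr($hg u)
  simp only [LinearMap.comp_apply, hgu, map_zero, LinearMap.smul_apply,
    Submonoid.smul_def, Algebra.smul_def] at hsψ
  exact mul_ne_zero hs hψ hsψ.symm

theorem one_tmul_ne_zero_of_algebraMap_dual_apply_ne_zero {A M k : Type*} [CommRing A]
    [AddCommGroup M] [Module A M] [CommSemiring k] [Algebra A k] (g : Module.Dual A M) {u : M}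
    (h : algebraMap A k (g u) ≠ 0) : (1 : k) ⊗ₜ[A] u ≠ 0 := by
  intro hu
  apply h
  simpa [Algebra.algebraMap_eq_smul_one] using
    congr(TensorProduct.rid A k (LinearMap.lTensor k g $hu))

/-- If an element `u` of a finitely generated module `M` over a Noetherian
domain `A` has nonzero image in `M ⊗_A K` (`K` the fraction field), then there
is a nonzero `f ∈ A` such that for every field `k` and every ring homomorphism
`A_f → k` (equivalently, every `A`-algebra structure on `k` in which `f` is
invertible, i.e. nonzero) the image of `u` in `M ⊗_A k` is nonzero. -/
theorem generic_nonvanishing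
    {A M : Type*} [CommRing A] [IsDomain A] [IsNoetherianRing A]
    [AddCommGroup M] [Module A M] [Module.Finite A M] (u : M)
    (hu : (1 : FractionRing A) ⊗ₜ[A] u ≠ (0 : FractionRing A ⊗[A] M)) :
    ∃ f : A, f ≠ 0 ∧
      ∀ (k : Type) [Field k] [Algebra A k],
        algebraMap A k f ≠ 0 → (1 : k) ⊗ₜ[A] u ≠ (0 : k ⊗[A] M) := by
  obtain ⟨g, hg⟩ := exists_dual_apply_ne_zero_of_one_tmul_ne_zero (nonZeroDivisors A) hu
  exact ⟨g u, hg, fun k _ _ hk => one_tmul_ne_zero_of_algebraMap_dual_apply_ne_zero g hk⟩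
end

section
/- Let A be a Noetherian integral domain with fraction field K, and let C be a bounded complex of finite free A-modules. Let u ∈ H^i(C) be a cohomology class whose image in H^i(C ⊗_A K) is nonzero. Then there exists a nonzero f ∈ A such that for every field k and every ring homomorphism A_f → k, the image of u in H^i(C ⊗_A k) is nonzero. -/
open scoped TensorProduct

/-!
A class that survives over the fraction field `K` is detected there by a `K`-linear functional
vanishing on the coboundaries. Over a Noetherian ring the cochain module is finitely presented,
so after clearing a single denominator this functional comes from an `A`-linear functional
`φ : C^{j+1} → A` that still vanishes on the coboundaries, with `φ u ≠ 0`. Take `f = φ u`: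
whenever `f` is nonzero in a field `k`, the base change of `φ` separates `1 ⊗ u` from the
coboundaries of `C ⊗_A k`.
-/

namespace LinearMap

variable {A M N : Type*} [CommRing A] [AddCommGroup M] [Module A M] [AddCommGroup N] [Module A N]

theorem exists_dual_comp_eq_zero_of_notMem_range {K V W : Type*} [Field K] [AddCommGroup V]
    [Module K V] [AddCommGroup W] [Module K W] {g : V →ₗ[K] W} {w : W} (hw : w ∉ range g) :
    ∃ μ : Module.Dual K W, μ ∘ₗ g = 0 ∧ μ w ≠ 0 := by
  obtain ⟨μ, hμw, hμg⟩ := Submodule.exists_dual_map_eq_bot_of_notMem hw inferInstance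
  refine ⟨μ, ?_, hμw⟩
  ext v
  have hμgv := Submodule.mem_map_of_mem (f := μ) (mem_range_self g v)
  rw [hμg] at hμgv
  simpa using hμgv

theorem exists_comp_eq_zero_apply_ne_zero_of_one_tmul_notMem_range_baseChange
    {K : Type*} [Field K] [Algebra A K] [IsFractionRing A K] [Module.FinitePresentation A M]
    {d : N →ₗ[A] M} {u : M} (hu : (1 : K) ⊗ₜ[A] u ∉ range (d.baseChange K)) :
    ∃ φ : M →ₗ[A] A, φ ∘ₗ d = 0 ∧ φ u ≠ 0 := by
  obtain ⟨μ, hμd, hμu⟩ := exists_dual_comp_eq_zero_of_notMem_range hu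
  set ψ : M →ₗ[A] K := μ.restrictScalars A ∘ₗ TensorProduct.mk A K M 1
  obtain ⟨φ, s, hφ⟩ := Module.FinitePresentation.exists_lift_of_isLocalizedModule
    (nonZeroDivisors A) (Algebra.linearMap A K) ψ
  have hψd : ψ ∘ₗ d = 0 := by
    ext x
    simpa [ψ] using congr($hμd (1 ⊗ₜ x))
  refine ⟨φ, ?_, fun hφu ↦ hμu ?_⟩
  · ext x
    have hψdx : ψ (d x) = 0 := congr($hψd x)
    simpa [hψdx, IsFractionRing.injective A K |>.eq_iff] using congr($hφ (d x))
  · have hsψu : s • ψ u = 0 := by simpa [hφu] using congr($hφ u).symm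
    rwa [Submonoid.smul_def, Algebra.smul_def, (IsLocalization.map_units K s).mul_right_eq_zero]
      at hsψu

theorem one_tmul_notMem_range_baseChange_of_comp_eq_zero {k : Type*} [CommRing k] [Algebra A k]
    {d : N →ₗ[A] M} {u : M} (φ : M →ₗ[A] A) (hφd : φ ∘ₗ d = 0)
    (hφu : algebraMap A k (φ u) ≠ 0) :
    (1 : k) ⊗ₜ[A] u ∉ range (d.baseChange k) := by
  rintro ⟨z, hz⟩
  set Φ : k ⊗[A] M →ₗ[k] k := ((Algebra.linearMap A k) ∘ₗ φ).liftBaseChange k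
  have hΦd : Φ ∘ₗ d.baseChange k = 0 := by
    ext x
    simpa [Φ] using congr(algebraMap A k ($hφd x))
  have hΦz := congr($hΦd z)
  rw [comp_apply, hz] at hΦz
  exact hφu (by simpa [Φ] using hΦz)

end LinearMap

theorem generic_nonvanishing_cohomology_general
    {A : Type*} [CommRing A] [IsDomain A] [IsNoetherianRing A]
    (C : ℤ → Type*) [∀ i, AddCommGroup (C i)] [∀ i, Module A (C i)]
    [∀ i, Module.Finite A (C i)]
    (d : ∀ i : ℤ, C i →ₗ[A] C (i + 1))
    (j : ℤ) (u : C (j + 1))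
    (hK : (1 : FractionRing A) ⊗ₜ[A] u ∉
      LinearMap.range (LinearMap.baseChange (FractionRing A) (d j))) :
    ∃ f : A, f ≠ 0 ∧
      ∀ (k : Type) [Field k] [Algebra A k], algebraMap A k f ≠ 0 →
        (1 : k) ⊗ₜ[A] u ∉ LinearMap.range (LinearMap.baseChange k (d j)) := by
  have := Module.finitePresentation_of_finite A (C (j + 1))
  obtain ⟨φ, hφd, hφu⟩ :=
    LinearMap.exists_comp_eq_zero_apply_ne_zero_of_one_tmul_notMem_range_baseChange hK
  exact ⟨φ u, hφu, fun k _ _ ↦ LinearMap.one_tmul_notMem_range_baseChange_of_comp_eq_zero φ hφd⟩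

/-- Let `C` be a bounded cochain complex of finite free modules over a
Noetherian domain `A`, and let `u` be a cocycle in degree `j+1` whose
cohomology class has nonzero image in `H^{j+1}(C ⊗_A K)` (equivalently, since
`1 ⊗ u` is automatically a cocycle, `1 ⊗ u` is not a coboundary). Then there is
a nonzero `f ∈ A` such that for every field `k` and ring homomorphism
`A_f → k` (i.e. `A`-algebra structure on `k` with `f ↦` a nonzero element),
the image of the class of `u` in `H^{j+1}(C ⊗_A k)` is nonzero. -/
theorem generic_nonvanishing_cohomology
    {A : Type*} [CommRing A] [IsDomain A] [IsNoetherianRing A]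
    (C : ℤ → Type*) [∀ i, AddCommGroup (C i)] [∀ i, Module A (C i)]
    [∀ i, Module.Finite A (C i)] [∀ i, Module.Free A (C i)]
    (d : ∀ i : ℤ, C i →ₗ[A] C (i + 1))
    (hd : ∀ (i : ℤ) (x : C i), d (i + 1) (d i x) = 0)
    (hbdd : ∃ a b : ℤ, ∀ i : ℤ, i < a ∨ b < i → Subsingleton (C i))
    (j : ℤ) (u : C (j + 1)) (hu : d (j + 1) u = 0)
    (hK : (1 : FractionRing A) ⊗ₜ[A] u ∉
      LinearMap.range (LinearMap.baseChange (FractionRing A) (d j))) :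
    ∃ f : A, f ≠ 0 ∧
      ∀ (k : Type) [Field k] [Algebra A k], algebraMap A k f ≠ 0 →
        (1 : k) ⊗ₜ[A] u ∉ LinearMap.range (LinearMap.baseChange k (d j)) :=
  generic_nonvanishing_cohomology_general C d j u hK
end

section
/- Let O be a discrete valuation ring with fraction field F, and let B be a nonzero O-algebra that is finite and flat as an O-module. Then there exists an O-algebra homomorphism from B to the integral closure Ō of O in an algebraic closure F̄ of F. -/
/-!
Since `B` is finite flat over the local ring `O`, it is free and nonzero, hence faithfully flat, so
`F̄ ⊗[O] B` is a nonzero finite `F̄`-algebra. Its residue fields are algebraic over `F̄`, hence equal to it, which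
gives an `O`-algebra map `B → F̄`; its image lies in `Ō` because `B` is integral over `O`.
-/

open TensorProduct

theorem IsAlgClosed.nonempty_algHom_of_isIntegral (K A : Type*) [Field K] [IsAlgClosed K]
    [CommRing A] [Nontrivial A] [Algebra K A] [Algebra.IsIntegral K A] :
    Nonempty (A →ₐ[K] K) := by
  obtain ⟨m, hm⟩ := Ideal.exists_maximal A
  let := Ideal.Quotient.field m
  exact ⟨IsAlgClosed.lift.comp (Ideal.Quotient.mkₐ K m)⟩

theorem nonempty_algHom_integralClosure_of_nontrivial_tensorProduct (R B K : Type*) [CommRing R]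
    [CommRing B] [Algebra R B] [Algebra.IsIntegral R B] [Field K] [IsAlgClosed K] [Algebra R K]
    [Nontrivial (K ⊗[R] B)] :
    Nonempty (B →ₐ[R] integralClosure R K) := by
  obtain ⟨ψ⟩ := IsAlgClosed.nonempty_algHom_of_isIntegral K (K ⊗[R] B)
  let φ : B →ₐ[R] K := (ψ.restrictScalars R).comp Algebra.TensorProduct.includeRight
  exact ⟨φ.codRestrict _ fun b => (Algebra.IsIntegral.isIntegral b).map φ⟩

/-- Let `O` be a discrete valuation ring with fraction field `F`, `F̄` an
algebraic closure of `F` and `Ō` the integral closure of `O` in `F̄`. Every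
nonzero `O`-algebra `B` that is finite and flat as an `O`-module admits an
`O`-algebra homomorphism to `Ō`, i.e. `Spec B` has an `Ō`-point over `O`. -/
theorem exists_point_in_integral_closure
    (O : Type) [CommRing O] [IsDomain O] [IsDiscreteValuationRing O]
    (B : Type) [CommRing B] [Nontrivial B] [Algebra O B]
    [Module.Finite O B] [Module.Flat O B] :
    Nonempty (B →ₐ[O] (integralClosure O (AlgebraicClosure (FractionRing O)))) := by
  have : Module.Free O B := Module.free_of_flat_of_isLocalRing
  have : Algebra.IsIntegral O B := Algebra.IsIntegral.of_finite O B
  exact nonempty_algHom_integralClosure_of_nontrivial_tensorProduct O B _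
end

section
/- Let F ⊆ F' be fields of characteristic zero, G a group, and V a finite-dimensional representation of G over F. If V is semisimple as an F[G]-module, then V ⊗_F F' is semisimple as an F'[G]-module. -/
/-!
Let `A ⊆ End_F V` be the span of `ρ(G)` and `B ⊆ End_{F'}(F' ⊗ V)` the span of `ρ(G) ⊗ 1`,
so that invariant subspaces are the `A`- resp. `B`-submodules. In characteristic zero a subalgebra
of endomorphisms acts semisimply iff its trace form `(a, b) ↦ tr(ab)` is nondegenerate: a
nondegenerate trace form kills the (nilpotent) Jacobson radical, and conversely the radical of
the trace form of a semisimple algebra is generated by an idempotent of trace zero, hence is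
zero. Nondegeneracy passes from `A` to `B` because `B` is spanned by the `a ⊗ 1` for a basis
`(a)` of `A`, whose Gram matrix is the image of that of `A`.
-/

open scoped TensorProduct
open LinearMap (trace)
open Submodule (span)

theorem Submodule.span_image_span_of_tower {R S M N : Type*} [CommSemiring R] [Semiring S]
    [Algebra R S] [AddCommMonoid M] [Module R M] [AddCommMonoid N] [Module R N] [Module S N]
    [IsScalarTower R S N] (f : M →ₗ[R] N) (t : Set M) :
    span S (f '' span R t) = span S (f '' t) := by
  rw [← Submodule.map_coe, Submodule.map_span, Submodule.span_span_of_tower]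

theorem Algebra.adjoin_range_toSubmodule {R A G : Type*} [CommSemiring R] [Semiring A]
    [Algebra R A] [Monoid G] (φ : G →* A) :
    Subalgebra.toSubmodule (Algebra.adjoin R (Set.range φ)) = span R (Set.range φ) := by
  rw [Algebra.adjoin_eq_span, ← MonoidHom.coe_mrange, Submonoid.closure_eq]

section TraceForm

variable {K M : Type*} [Field K] [AddCommGroup M] [Module K M]

def TraceFormNondegenerate (P : Submodule K (Module.End K M)) : Prop :=
  ∀ a ∈ P, (∀ b ∈ P, trace K M (b * a) = 0) → a = 0

namespace Submodule

def stabilizerSubalgebra (p : Submodule K M) : Subalgebra K (Module.End K M) where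
  carrier := {f | p.map f ≤ p}
  mul_mem' {f g} hf hg := by
    simp only [Set.mem_ofPred_eq, Module.End.mul_eq_comp, Submodule.map_comp] at *
    exact (Submodule.map_mono hg).trans hf
  add_mem' {f g} hf hg := (Submodule.map_add_le (p := p) f g).trans (sup_le hf hg)
  algebraMap_mem' r := by
    rintro _ ⟨x, hx, rfl⟩
    exact p.smul_mem r hx

theorem mem_stabilizerSubalgebra {p : Submodule K M} {f : Module.End K M} :
    f ∈ p.stabilizerSubalgebra ↔ p.map f ≤ p :=
  Eq.to_iff rfl

variable {A : Subalgebra K (Module.End K M)}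

def ofLEStabilizer (p : Submodule K M) (hA : A ≤ p.stabilizerSubalgebra) : Submodule A M where
  toAddSubmonoid := p.toAddSubmonoid
  smul_mem' a _ hx := mem_stabilizerSubalgebra.1 (hA a.2) ⟨_, hx, rfl⟩

theorem le_stabilizerSubalgebra_restrictScalars (q : Submodule A M) :
    A ≤ (q.restrictScalars K).stabilizerSubalgebra := by
  intro a ha
  rw [mem_stabilizerSubalgebra]
  rintro _ ⟨x, hx, rfl⟩
  exact q.smul_mem ⟨a, ha⟩ hx

end Submodule

theorem isSemisimpleModule_adjoin_iff (s : Set (Module.End K M)) :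
    IsSemisimpleModule (Algebra.adjoin K s) M ↔
      ∀ W : Submodule K M, (∀ f ∈ s, W.map f ≤ W) →
        ∃ W' : Submodule K M, (∀ f ∈ s, W'.map f ≤ W') ∧ IsCompl W W' := by
  constructor
  · intro _ W hW
    obtain ⟨q, hq⟩ := exists_isCompl (W.ofLEStabilizer
      (Algebra.adjoin_le fun f hf => Submodule.mem_stabilizerSubalgebra.2 (hW f hf)))
    exact ⟨q.restrictScalars K,
      fun f hf => Submodule.mem_stabilizerSubalgebra.1
        (q.le_stabilizerSubalgebra_restrictScalars (Algebra.subset_adjoin hf)),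
      (Submodule.isCompl_restrictScalars_iff K).2 hq⟩
  · refine fun h => { exists_isCompl := fun q => ?_ }
    obtain ⟨W', hW', hq⟩ := h (q.restrictScalars K)
      fun f hf => Submodule.mem_stabilizerSubalgebra.1
        (q.le_stabilizerSubalgebra_restrictScalars (Algebra.subset_adjoin hf))
    exact ⟨W'.ofLEStabilizer
      (Algebra.adjoin_le fun f hf => Submodule.mem_stabilizerSubalgebra.2 (hW' f hf)),
      (Submodule.isCompl_restrictScalars_iff K).1 hq⟩

theorem TraceFormNondegenerate.isSemisimpleRing [FiniteDimensional K M]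
    {A : Subalgebra K (Module.End K M)} (h : TraceFormNondegenerate (Subalgebra.toSubmodule A)) :
    IsSemisimpleRing A := by
  have : IsArtinianRing A := isArtinian_of_tower K inferInstance
  rw [IsArtinianRing.isSemisimpleRing_iff_jacobson, eq_bot_iff]
  obtain ⟨n, hn⟩ := IsSemiprimaryRing.isNilpotent (R := A)
  intro a ha
  refine (Submodule.mem_bot A).2 (Subtype.ext (h a a.2 fun b hb => ?_))
  have hnil : IsNilpotent (⟨b, hb⟩ * a : A) :=
    ⟨n, by simpa [hn] using Submodule.pow_mem_pow _ (Ideal.mul_mem_left _ ⟨b, hb⟩ ha) n⟩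
  exact (LinearMap.isNilpotent_trace_of_isNilpotent (hnil.map A.val)).eq_zero

namespace Subalgebra

variable (A : Subalgebra K (Module.End K M))

def traceFormRadical : Ideal A where
  carrier := {a | ∀ b : A, trace K M (b * a : Module.End K M) = 0}
  add_mem' ha ha' b := by simp [mul_add, ha b, ha' b]
  zero_mem' b := by simp
  smul_mem' c a ha b := by simpa [mul_assoc] using ha (b * c)

theorem isSemisimpleRing_of_isSemisimpleModule [FiniteDimensional K M]
    [IsSemisimpleModule A M] : IsSemisimpleRing A := by
  have : IsArtinianRing A := isArtinian_of_tower K inferInstance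
  rw [IsArtinianRing.isSemisimpleRing_iff_jacobson, eq_bot_iff,
    ← Module.annihilator_eq_bot.2 (inferInstance : FaithfulSMul A M)]
  exact IsSemisimpleModule.jacobson_le_annihilator A M

theorem traceFormNondegenerate_of_isSemisimpleModule [CharZero K] [FiniteDimensional K M]
    [IsSemisimpleModule A M] : TraceFormNondegenerate (Subalgebra.toSubmodule A) := by
  have := isSemisimpleRing_of_isSemisimpleModule A
  obtain ⟨e, he, hspan⟩ := IsSemisimpleRing.ideal_eq_span_idempotent A.traceFormRadical
  have he0 : e = 0 := by
    have htr : trace K M e = 0 := by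
      simpa using (hspan ▸ Ideal.subset_span rfl : e ∈ A.traceFormRadical) 1
    exact Subtype.ext (LinearMap.IsIdempotentElem.eq_zero_of_trace_eq_zero (he.map A.val) htr)
  intro a ha hrad
  have : (⟨a, ha⟩ : A) ∈ A.traceFormRadical := fun b => hrad b b.2
  rw [hspan, he0, Ideal.span_singleton_eq_bot.2 rfl] at this
  simpa using congrArg Subtype.val this

end Subalgebra

noncomputable def traceGram {ι : Type*} (w : ι → Module.End K M) : Matrix ι ι K :=
  Matrix.of fun i j => trace K M (w i * w j)

theorem traceGram_baseChange {ι F : Type*} (F' : Type*) {V : Type*} [Field F] [Field F']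
    [Algebra F F'] [AddCommGroup V] [Module F V] [FiniteDimensional F V]
    (w : ι → Module.End F V) :
    traceGram (fun i => (w i).baseChange F') = (traceGram w).map (algebraMap F F') := by
  ext i j
  simp [traceGram, ← LinearMap.baseChange_mul]

section Gram

variable {ι : Type*} [Fintype ι] [DecidableEq ι]

theorem traceFormNondegenerate_span_of_det_ne_zero {w : ι → Module.End K M}
    (h : (traceGram w).det ≠ 0) : TraceFormNondegenerate (span K (Set.range w)) := by
  intro a ha hrad
  obtain ⟨c, rfl⟩ := (Submodule.mem_span_range_iff_exists_fun K).1 ha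
  have hc : (traceGram w).mulVec c = 0 := funext fun i => by
    simpa [traceGram, Matrix.mulVec, dotProduct, Finset.mul_sum, mul_comm (c _)] using
      hrad (w i) (Submodule.subset_span ⟨i, rfl⟩)
  obtain rfl : c = 0 := by
    by_contra hc0
    exact h (Matrix.exists_mulVec_eq_zero_iff.1 ⟨c, hc0, hc⟩)
  simp

theorem TraceFormNondegenerate.det_traceGram_ne_zero {w : ι → Module.End K M}
    (hw : LinearIndependent K w) (h : TraceFormNondegenerate (span K (Set.range w))) :
    (traceGram w).det ≠ 0 := by
  intro h0
  obtain ⟨c, hc0, hc⟩ := Matrix.exists_mulVec_eq_zero_iff.2 h0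
  refine hc0 (funext (Fintype.linearIndependent_iff.1 hw c (h _ ?_ fun b hb => ?_)))
  · exact Submodule.sum_mem _ fun j _ =>
      Submodule.smul_mem _ _ (Submodule.subset_span ⟨j, rfl⟩)
  · have hspan : span K (Set.range w) ≤ LinearMap.ker ((trace K M).comp
        (LinearMap.mulRight K (∑ j, c j • w j))) := by
      rw [Submodule.span_le]
      rintro _ ⟨i, rfl⟩
      simpa [traceGram, Matrix.mulVec, dotProduct, Finset.mul_sum, mul_comm (c _)] using
        congrFun hc i
    exact hspan hb

end Gram

theorem TraceFormNondegenerate.baseChange {F : Type*} (F' : Type*) {V : Type*} [Field F]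
    [Field F'] [Algebra F F'] [AddCommGroup V] [Module F V] [FiniteDimensional F V]
    {s : Set (Module.End F V)} (h : TraceFormNondegenerate (span F s)) :
    TraceFormNondegenerate (span F' (LinearMap.baseChange F' '' s)) := by
  classical
  obtain ⟨b, hbs, hspan, hli⟩ := exists_linearIndependent F s
  have : Fintype b := @Fintype.ofFinite _ hli.finite
  let bc := LinearMap.baseChangeHom F F' V V
  have hspan' : span F' (LinearMap.baseChange F' '' s) =
      span F' (Set.range fun i : b => (i : Module.End F V).baseChange F') := by
    refine le_antisymm ?_ (Submodule.span_mono ?_)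
    · calc span F' (bc '' s) ≤ span F' (bc '' span F s) :=
            Submodule.span_mono (Set.image_mono Submodule.subset_span)
        _ = span F' (bc '' b) := by rw [← hspan, Submodule.span_image_span_of_tower]
        _ = _ := by rw [Set.image_eq_range]; rfl
    · rintro _ ⟨i, rfl⟩
      exact ⟨i, hbs i.2, rfl⟩
  rw [hspan']
  apply traceFormNondegenerate_span_of_det_ne_zero
  rw [traceGram_baseChange, ← RingHom.mapMatrix_apply, ← RingHom.map_det, Ne,
    map_eq_zero_iff _ (algebraMap F F').injective]
  refine TraceFormNondegenerate.det_traceGram_ne_zero hli ?_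
  rwa [Subtype.range_coe, hspan]

end TraceForm

theorem semisimple_of_extension_of_scalars_general
    {F F' : Type*} [Field F] [Field F'] [Algebra F F'] [CharZero F]
    {G : Type*} [Group G] {V : Type*} [AddCommGroup V] [Module F V]
    [FiniteDimensional F V] (ρ : Representation F G V)
    (hss : ∀ W : Submodule F V, (∀ g : G, W.map (ρ g) ≤ W) →
      ∃ W' : Submodule F V, (∀ g : G, W'.map (ρ g) ≤ W') ∧ IsCompl W W') :
    ∀ W : Submodule F' (F' ⊗[F] V), (∀ g : G, W.map ((ρ g).baseChange F') ≤ W) →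
      ∃ W' : Submodule F' (F' ⊗[F] V),
        (∀ g : G, W'.map ((ρ g).baseChange F') ≤ W') ∧ IsCompl W W' := by
  let ρ' : G →* Module.End F' (F' ⊗[F] V) :=
    (Module.End.baseChangeHom F F' V : Module.End F V →* _).comp ρ
  have : IsSemisimpleModule (Algebra.adjoin F (Set.range ρ)) V :=
    (isSemisimpleModule_adjoin_iff _).2 (by simpa only [Set.forall_mem_range] using hss)
  have hA : TraceFormNondegenerate (span F (Set.range ρ)) := by
    rw [← Algebra.adjoin_range_toSubmodule]
    exact Subalgebra.traceFormNondegenerate_of_isSemisimpleModule _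
  have hB : TraceFormNondegenerate
      (Subalgebra.toSubmodule (Algebra.adjoin F' (Set.range ρ'))) := by
    rw [Algebra.adjoin_range_toSubmodule, MonoidHom.coe_comp, Set.range_comp]
    exact hA.baseChange F'
  have := hB.isSemisimpleRing
  have hcompl := (isSemisimpleModule_adjoin_iff (Set.range ρ')).1 inferInstance
  simp only [Set.forall_mem_range] at hcompl
  exact hcompl

/-- In characteristic zero, semisimplicity of a finite-dimensional
representation is preserved under extension of scalars: if every invariant
subspace of `V` has an invariant complement, the same holds for the induced
representation of `G` on `F' ⊗_F V`. -/
theorem semisimple_of_extension_of_scalars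
    {F F' : Type*} [Field F] [Field F'] [Algebra F F'] [CharZero F] [CharZero F']
    {G : Type*} [Group G] {V : Type*} [AddCommGroup V] [Module F V]
    [FiniteDimensional F V] (ρ : Representation F G V)
    (hss : ∀ W : Submodule F V, (∀ g : G, W.map (ρ g) ≤ W) →
      ∃ W' : Submodule F V, (∀ g : G, W'.map (ρ g) ≤ W') ∧ IsCompl W W') :
    ∀ W : Submodule F' (F' ⊗[F] V), (∀ g : G, W.map ((ρ g).baseChange F') ≤ W) →
      ∃ W' : Submodule F' (F' ⊗[F] V),
        (∀ g : G, W'.map ((ρ g).baseChange F') ≤ W') ∧ IsCompl W W' :=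
  semisimple_of_extension_of_scalars_general ρ hss
end
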